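/- (Upper estimate of the inner-product sum, -1 < q < 0) Suppose -1 < q < 0 and set F(q) = D(q)³·C(|q|)³/(1-|q|). For all natural numbers r, s, r', s', k with r + s = r' + s' and r ≥ r', one has |∑_{i=0}^{r'} q^{(r-i)(r'-i) + k(r-i) + k(r'-i)}·[r']_q!·[s']_q!·binom(r,i)_q·binom(s,r'-i)_q| ≤ F(q)·|q|^{k(r-r')}·[r+s]_q!, where terms with i > r or r' - i > s vanish since the corresponding q-binomial coefficient is 0. -/

import Mathlib

/-- The q-integer `[n]_q = (1 - q^n)/(1 - q)`. -/
noncomputable def qInt (q : ℝ) (n : ℕ) : ℝ := (1 - q ^ n) / (1 - q)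

/-- The q-factorial `[n]_q! = [1]_q ⋯ [n]_q`, with `[0]_q! = 1`. -/
noncomputable def qFact (q : ℝ) : ℕ → ℝ
  | 0 => 1
  | n + 1 => qFact q n * qInt q (n + 1)

/-- The q-binomial coefficient `binom(n,m)_q`, with value `0` when `m > n`. -/
noncomputable def qBinom (q : ℝ) (n m : ℕ) : ℝ :=
  if m ≤ n then qFact q n / (qFact q m * qFact q (n - m)) else 0

/-- The constant `C(t) = ∏_{i=1}^∞ (1 - t^i)⁻¹` for `0 ≤ t < 1`. -/
noncomputable def Cconst (t : ℝ) : ℝ := ∏' i : ℕ, (1 - t ^ (i + 1))⁻¹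

/-- The constant `D(q) = ∏_{i=1}^∞ (1 + |q|^i)` for `-1 < q < 1`. -/
noncomputable def Dconst (q : ℝ) : ℝ := ∏' i : ℕ, (1 + |q| ^ (i + 1))

/-!
Every q-binomial coefficient, and the ratio `[a]_q! [b]_q! / [a+b]_q!`, is a product over `j` of
ratios of q-integers `(1 - q^n) / (1 - q^j)` with `n ≥ j`, each at most
`(1 + |q|^j) / (1 - |q|^j)`; the product of these bounds is at most `D(q) C(|q|)`. This bounds each
summand by `(D C)³ [r+s]_q!` times `|q|` to its exponent, which is at least
`k (r - r') + (r' - i)` since `i ≤ r' ≤ r`; the geometric series in `r' - i` gives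
`1 / (1 - |q|)`.
-/

open Finset

theorem Multipliable.prod_le_tprod_of_one_le {ι R : Type*} [CommSemiring R] [PartialOrder R]
    [IsOrderedRing R] [TopologicalSpace R] [OrderClosedTopology R] {f : ι → R}
    (hf : Multipliable f) (h : ∀ i, 1 ≤ f i) (s : Finset ι) :
    ∏ i ∈ s, f i ≤ ∏' i, f i :=
  ge_of_tendsto hf.hasProd <| Filter.eventually_atTop.2 ⟨s, fun _ hst =>
    prod_le_prod_of_subset_of_one_le hst (fun i _ => zero_le_one.trans (h i)) fun i _ _ => h i⟩

theorem div_one_sub_le_of_abs_le {u v s : ℝ} (hu : |u| ≤ s) (hv : |v| ≤ s) (hs : s < 1) :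
    (1 - u) / (1 - v) ≤ (1 + s) / (1 - s) :=
  div_le_div₀ (by linarith [abs_nonneg u]) (by linarith [neg_abs_le u]) (by linarith)
    (by linarith [le_abs_self v])

section Products

variable {t : ℝ}

theorem multipliable_one_add_pow_succ (h0 : 0 ≤ t) (h1 : t < 1) :
    Multipliable fun i : ℕ => 1 + t ^ (i + 1) :=
  Real.multipliable_one_add_of_summable <| by
    simpa only [pow_succ] using (summable_geometric_of_lt_one h0 h1).mul_right t

theorem multipliable_inv_one_sub_pow_succ (h0 : 0 ≤ t) (h1 : t < 1) :
    Multipliable fun i : ℕ => (1 - t ^ (i + 1))⁻¹ := by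
  have hpos (i : ℕ) : 0 < 1 - t ^ (i + 1) := sub_pos.2 (pow_lt_one₀ h0 h1 i.succ_ne_zero)
  -- `(1 - x)⁻¹ = 1 + x / (1 - x)`, and `x / (1 - x) ≤ x / (1 - t)` for `x = t ^ (i + 1) ≤ t`
  have hsum : Summable fun i : ℕ => t ^ (i + 1) / (1 - t ^ (i + 1)) := by
    refine Summable.of_nonneg_of_le (fun i => div_nonneg (by positivity) (hpos i).le)
      (fun i => ?_) ((summable_geometric_of_lt_one h0 h1).div_const (1 - t))
    exact div_le_div₀ (pow_nonneg h0 i) (pow_le_pow_of_le_one h0 h1.le i.le_succ) (sub_pos.2 h1)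
      (sub_le_sub_left (pow_le_of_le_one h0 h1.le i.succ_ne_zero) 1)
  refine (Real.multipliable_one_add_of_summable hsum).congr fun i => ?_
  field_simp [(hpos i).ne']
  ring

theorem sum_range_pow_sub_le_inv_one_sub (h0 : 0 ≤ t) (h1 : t < 1) (n : ℕ) :
    ∑ i ∈ range (n + 1), t ^ (n - i) ≤ (1 - t)⁻¹ := by
  have hreflect := sum_range_reflect (fun j => t ^ j) (n + 1)
  simp only [add_tsub_cancel_right] at hreflect
  rw [hreflect, ← tsum_geometric_of_lt_one h0 h1]
  exact (summable_geometric_of_lt_one h0 h1).sum_le_tsum _ fun _ _ => pow_nonneg h0 _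

end Products

section QAnalogues

variable {q : ℝ}

theorem prod_range_le_Dconst_mul_Cconst (hq : |q| < 1) {f : ℕ → ℝ} (hf₀ : ∀ j, 0 ≤ f j)
    (hf : ∀ j, f j ≤ (1 + |q| ^ (j + 1)) / (1 - |q| ^ (j + 1))) (m : ℕ) :
    ∏ j ∈ range m, f j ≤ Dconst q * Cconst |q| := by
  have h0 := abs_nonneg q
  have hD (j : ℕ) : 1 ≤ 1 + |q| ^ (j + 1) := le_add_of_nonneg_right (pow_nonneg h0 _)
  have hC (j : ℕ) : 1 ≤ (1 - |q| ^ (j + 1))⁻¹ :=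
    (one_le_inv₀ (sub_pos.2 (pow_lt_one₀ h0 hq j.succ_ne_zero))).2
      (sub_le_self _ (pow_nonneg h0 _))
  have hDprod := (multipliable_one_add_pow_succ h0 hq).prod_le_tprod_of_one_le hD
  have hCprod := (multipliable_inv_one_sub_pow_succ h0 hq).prod_le_tprod_of_one_le hC
  calc ∏ j ∈ range m, f j
      ≤ (∏ j ∈ range m, (1 + |q| ^ (j + 1))) *
          ∏ j ∈ range m, (1 - |q| ^ (j + 1))⁻¹ := by
        rw [← prod_mul_distrib]
        exact prod_le_prod (fun j _ => hf₀ j) fun j _ => hf j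
    _ ≤ Dconst q * Cconst |q| := by
        gcongr
        · exact prod_nonneg fun j _ => zero_le_one.trans (hC j)
        · exact zero_le_one.trans (by simpa [Dconst] using hDprod ∅)
        · exact hDprod _
        · exact hCprod _

theorem one_le_Dconst_mul_Cconst (hq : |q| < 1) : 1 ≤ Dconst q * Cconst |q| := by
  simpa using prod_range_le_Dconst_mul_Cconst hq (fun _ => le_rfl)
    (fun j => div_nonneg (by positivity) (sub_nonneg.2 (pow_le_one₀ (abs_nonneg q) hq.le))) 0

theorem qInt_pos (hq : |q| < 1) {n : ℕ} (hn : n ≠ 0) : 0 < qInt q n :=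
  div_pos
    (sub_pos.2 ((le_abs_self _).trans_lt (abs_pow q n ▸ pow_lt_one₀ (abs_nonneg q) hq hn)))
    (sub_pos.2 ((le_abs_self q).trans_lt hq))

theorem qFact_pos (hq : |q| < 1) (n : ℕ) : 0 < qFact q n := by
  induction n with
  | zero => exact one_pos
  | succ n ih => exact mul_pos ih (qInt_pos hq n.succ_ne_zero)

theorem qBinom_nonneg (hq : |q| < 1) (n m : ℕ) : 0 ≤ qBinom q n m := by
  unfold qBinom
  split_ifs
  · exact div_nonneg (qFact_pos hq n).le (mul_pos (qFact_pos hq m) (qFact_pos hq (n - m))).le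
  · exact le_rfl

theorem qFact_add (q : ℝ) (a b : ℕ) :
    qFact q (a + b) = qFact q a * ∏ j ∈ range b, qInt q (a + j + 1) := by
  induction b with
  | zero => simp
  | succ b ih => rw [← add_assoc, qFact, ih, prod_range_succ, mul_assoc]

theorem qFact_eq_prod (q : ℝ) (n : ℕ) : qFact q n = ∏ j ∈ range n, qInt q (j + 1) := by
  simpa [qFact] using qFact_add q 0 n

theorem qInt_div_qInt_le (hq : |q| < 1) {n j : ℕ} (hjn : j + 1 ≤ n) :
    qInt q n / qInt q (j + 1) ≤ (1 + |q| ^ (j + 1)) / (1 - |q| ^ (j + 1)) ∧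
      qInt q (j + 1) / qInt q n ≤ (1 + |q| ^ (j + 1)) / (1 - |q| ^ (j + 1)) := by
  have hq1 : 1 - q ≠ 0 := (sub_pos.2 ((le_abs_self q).trans_lt hq)).ne'
  have hlt : |q| ^ (j + 1) < 1 := pow_lt_one₀ (abs_nonneg q) hq j.succ_ne_zero
  have hn : |q ^ n| ≤ |q| ^ (j + 1) :=
    abs_pow q n ▸ pow_le_pow_of_le_one (abs_nonneg q) hq.le hjn
  have hj : |q ^ (j + 1)| ≤ |q| ^ (j + 1) := (abs_pow q _).le
  simp only [qInt, div_div_div_cancel_right₀ hq1]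
  exact ⟨div_one_sub_le_of_abs_le hn hj hlt, div_one_sub_le_of_abs_le hj hn hlt⟩

theorem qBinom_le_Dconst_mul_Cconst (hq : |q| < 1) (n m : ℕ) :
    qBinom q n m ≤ Dconst q * Cconst |q| := by
  by_cases hmn : m ≤ n
  · have hprod : qBinom q n m = ∏ j ∈ range m, qInt q (n - m + j + 1) / qInt q (j + 1) := by
      have hsplit := qFact_add q (n - m) m
      rw [Nat.sub_add_cancel hmn] at hsplit
      rw [qBinom, if_pos hmn, hsplit, prod_div_distrib, ← qFact_eq_prod, mul_comm (qFact q m),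
        mul_div_mul_left _ _ (qFact_pos hq (n - m)).ne']
    rw [hprod]
    exact prod_range_le_Dconst_mul_Cconst hq
      (fun j => div_nonneg (qInt_pos hq (by omega)).le (qInt_pos hq (by omega)).le)
      (fun j => (qInt_div_qInt_le hq (by omega)).1) m
  · rw [qBinom, if_neg hmn]
    exact zero_le_one.trans (one_le_Dconst_mul_Cconst hq)

theorem qFact_mul_qFact_le (hq : |q| < 1) (a b : ℕ) :
    qFact q a * qFact q b ≤ Dconst q * Cconst |q| * qFact q (a + b) := by
  have hP : 0 < ∏ j ∈ range b, qInt q (a + j + 1) :=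
    prod_pos fun j _ => qInt_pos hq (by omega)
  have hratio : qFact q b / ∏ j ∈ range b, qInt q (a + j + 1) ≤ Dconst q * Cconst |q| := by
    rw [qFact_eq_prod, ← prod_div_distrib]
    exact prod_range_le_Dconst_mul_Cconst hq
      (fun j => div_nonneg (qInt_pos hq (by omega)).le (qInt_pos hq (by omega)).le)
      (fun j => (qInt_div_qInt_le hq (by omega)).2) b
  rw [div_le_iff₀ hP] at hratio
  rw [qFact_add, mul_left_comm]
  exact mul_le_mul_of_nonneg_left hratio (qFact_pos hq a).le

theorem abs_inner_sum_term_le (hq : |q| < 1) {r s r' s' i : ℕ} (k : ℕ) (hsum : r + s = r' + s')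
    (hi : i ≤ r') (hr : r' ≤ r) :
    |q ^ ((r - i) * (r' - i) + k * (r - i) + k * (r' - i)) *
        qFact q r' * qFact q s' * qBinom q r i * qBinom q s (r' - i)| ≤
      (Dconst q * Cconst |q|) ^ 3 * qFact q (r + s) * |q| ^ (k * (r - r')) * |q| ^ (r' - i) := by
  have h0 := abs_nonneg q
  have hexp : k * (r - r') + (r' - i) ≤ (r - i) * (r' - i) + k * (r - i) + k * (r' - i) := by
    have hquad : r' - i ≤ (r - i) * (r' - i) :=
      (Nat.le_mul_self _).trans (Nat.mul_le_mul_right _ (by omega))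
    have hlin : k * (r - r') ≤ k * (r - i) := Nat.mul_le_mul_left k (by omega)
    omega
  have hpow := (pow_le_pow_of_le_one h0 hq.le hexp).trans_eq (pow_add _ _ _)
  have hDC := zero_le_one.trans (one_le_Dconst_mul_Cconst hq)
  have hfact := hsum ▸ qFact_mul_qFact_le hq r' s'
  have hbinom₁ := qBinom_le_Dconst_mul_Cconst hq r i
  have hbinom₂ := qBinom_le_Dconst_mul_Cconst hq s (r' - i)
  have hbinom₁₀ := qBinom_nonneg hq r i
  have hbinom₂₀ := qBinom_nonneg hq s (r' - i)
  have hfact₀ := (mul_pos (qFact_pos hq r') (qFact_pos hq s')).le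
  rw [abs_mul, abs_mul, abs_mul, abs_mul, abs_pow, abs_of_pos (qFact_pos hq r'),
    abs_of_pos (qFact_pos hq s'), abs_of_nonneg hbinom₁₀, abs_of_nonneg hbinom₂₀]
  calc _ = |q| ^ ((r - i) * (r' - i) + k * (r - i) + k * (r' - i)) *
        (qFact q r' * qFact q s') * (qBinom q r i * qBinom q s (r' - i)) := by ring
    _ ≤ (|q| ^ (k * (r - r')) * |q| ^ (r' - i)) *
        (Dconst q * Cconst |q| * qFact q (r + s)) *
        ((Dconst q * Cconst |q|) * (Dconst q * Cconst |q|)) := by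
        gcongr
        exact mul_nonneg (by positivity) (mul_nonneg hDC (qFact_pos hq _).le)
    _ = _ := by ring

end QAnalogues

/-- Upper estimate of the inner-product sum for `-1 < q < 0`,
with `F(q) = D(q)³ C(|q|)³ / (1 - |q|)`. -/
theorem inner_sum_upper_neg (q : ℝ) (hq₁ : -1 < q) (hq₂ : q < 0)
    (r s r' s' k : ℕ) (hsum : r + s = r' + s') (hr : r' ≤ r) :
    |∑ i ∈ Finset.range (r' + 1),
      q ^ ((r - i) * (r' - i) + k * (r - i) + k * (r' - i)) *
        qFact q r' * qFact q s' * qBinom q r i * qBinom q s (r' - i)| ≤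
    (Dconst q ^ 3 * Cconst |q| ^ 3 / (1 - |q|)) * |q| ^ (k * (r - r')) * qFact q (r + s) := by
  have hq : |q| < 1 := abs_lt.2 ⟨hq₁, hq₂.trans one_pos⟩
  have h0 := abs_nonneg q
  set B := (Dconst q * Cconst |q|) ^ 3 * qFact q (r + s) * |q| ^ (k * (r - r'))
  have hB : 0 ≤ B := mul_nonneg (mul_nonneg (pow_nonneg (zero_le_one.trans
    (one_le_Dconst_mul_Cconst hq)) 3) (qFact_pos hq (r + s)).le) (pow_nonneg h0 _)
  calc _ ≤ ∑ i ∈ range (r' + 1), B * |q| ^ (r' - i) := by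
        refine (abs_sum_le_sum_abs _ _).trans (sum_le_sum fun i hi => ?_)
        exact abs_inner_sum_term_le hq k hsum (Nat.lt_succ_iff.1 (mem_range.1 hi)) hr
    _ ≤ B * (1 - |q|)⁻¹ := by
        rw [← mul_sum]
        exact mul_le_mul_of_nonneg_left (sum_range_pow_sub_le_inv_one_sub h0 hq r') hB
    _ = _ := by ring
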